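/- Let λ ≥ 2 be a cardinal. Let τ_mi be the topology on the λ-polycyclic monoid P_λ in which every nonzero element is isolated and the sets U_A(0) = {a⁻¹b : a, b ∈ M_λ \ A} ∪ {0}, for A ranging over finite subsets of the free monoid M_λ, form a base of neighborhoods at 0. Then τ_mi is a Hausdorff topology and (P_λ, τ_mi) is a topological inverse semigroup, i.e., multiplication and inversion are continuous with respect to τ_mi. -/

import Mathlib

universe u v

/-- An inverse semigroup: every element has a unique (von Neumann) inverse. -/
class InverseSemigroup (S : Type u) extends Semigroup S, Inv S where
  mul_inv_mul : ∀ a : S, a * a⁻¹ * a = a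
  inv_mul_inv : ∀ a : S, a⁻¹ * a * a⁻¹ = a⁻¹
  inv_unique : ∀ a b : S, a * b * a = a → b * a * b = b → b = a⁻¹

/-- The λ-polycyclic monoid over the index type `ι` (of cardinality λ), realized as
`(M_λ × M_λ) ∪ {0}` where `M_λ = FreeMonoid ι` is the free monoid on λ generators;
the pair `(a, b)` encodes the element `a⁻¹b` and `none` is the zero. -/
abbrev PolyMon (ι : Type u) : Type u := Option (FreeMonoid ι × FreeMonoid ι)

/-- The nonzero element `a⁻¹b` of the polycyclic monoid. -/
def polyEl {ι : Type u} (a b : FreeMonoid ι) : PolyMon ι := some (a, b)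

instance {ι : Type u} : Zero (PolyMon ι) := ⟨none⟩

instance {ι : Type u} : One (PolyMon ι) := ⟨polyEl 1 1⟩

open Classical in
/-- Multiplication of the polycyclic monoid:
`a⁻¹b · c⁻¹d = (c₁a)⁻¹d` if `c = c₁b`; `= a⁻¹(b₁d)` if `b = b₁c`; `= 0` otherwise,
and `0` is a two-sided zero. -/
noncomputable def polyMul {ι : Type u} (x y : PolyMon ι) : PolyMon ι :=
  Option.bind x fun p => Option.bind y fun q =>
    if h : ∃ c₁ : FreeMonoid ι, q.1 = c₁ * p.2 then some (Classical.choose h * p.1, q.2)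
    else if h' : ∃ b₁ : FreeMonoid ι, p.2 = b₁ * q.1 then some (p.1, Classical.choose h' * q.2)
    else none

noncomputable instance {ι : Type u} : Mul (PolyMon ι) := ⟨polyMul⟩

/-- Inversion of the polycyclic monoid: `(a⁻¹b)⁻¹ = b⁻¹a` and `0⁻¹ = 0`. -/
instance {ι : Type u} : Inv (PolyMon ι) :=
  ⟨fun x => Option.map (fun p => (p.2, p.1)) x⟩

/-- The basic neighbourhood `U_A(0) = {a⁻¹b : a, b ∈ M_λ \ A} ∪ {0}` of zero. -/
def U0 {ι : Type u} (A : Set (FreeMonoid ι)) : Set (PolyMon ι) :=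
  {x | x = 0 ∨ ∃ a b : FreeMonoid ι, a ∉ A ∧ b ∉ A ∧ x = polyEl a b}

/-- The topology `τ_mi` on the polycyclic monoid: all nonzero elements are isolated and
the sets `U_A(0)`, for `A` a finite subset of the free monoid, form a base at `0`. -/
def tauMi (ι : Type u) : TopologicalSpace (PolyMon ι) :=
  TopologicalSpace.generateFrom
    ({s | ∃ x : PolyMon ι, x ≠ 0 ∧ s = {x}} ∪
     {s | ∃ A : Set (FreeMonoid ι), A.Finite ∧ s = U0 A})

/-!
Every nonzero element is isolated, so only neighbourhoods of `0` need care. A nonzero product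
`a⁻¹b · c⁻¹d` is `(c₁a)⁻¹d` or `a⁻¹(b₁d)`, so it lies in `U_A(0)` as soon as `a` and `d` avoid
all suffixes of words of `A`; when one factor is a fixed nonzero element, excluding finitely many
further words for the other factor has the same effect. Inversion swaps the two coordinates and
maps each basic open set onto itself.
-/

namespace PolyMon

variable {ι : Type u}

theorem polyEl_ne_zero (a b : FreeMonoid ι) : polyEl a b ≠ 0 := Option.some_ne_none _

theorem exists_eq_polyEl {x : PolyMon ι} (hx : x ≠ 0) : ∃ a b, x = polyEl a b := by
  obtain ⟨⟨a, b⟩, rfl⟩ := Option.ne_none_iff_exists'.mp hx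
  exact ⟨a, b, rfl⟩

protected theorem zero_mul (y : PolyMon ι) : 0 * y = 0 := rfl

protected theorem mul_zero (x : PolyMon ι) : x * 0 = 0 := by cases x <;> rfl

theorem ne_zero_and_ne_zero_of_mul_ne_zero {x y : PolyMon ι} (h : x * y ≠ 0) :
    x ≠ 0 ∧ y ≠ 0 :=
  ⟨by rintro rfl; exact h (PolyMon.zero_mul y), by rintro rfl; exact h (PolyMon.mul_zero x)⟩

theorem polyEl_mul_polyEl_cases (a b c d : FreeMonoid ι) :
    (∃ c₁, c = c₁ * b ∧ polyEl a b * polyEl c d = polyEl (c₁ * a) d) ∨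
    (∃ b₁, b = b₁ * c ∧ polyEl a b * polyEl c d = polyEl a (b₁ * d)) ∨
    polyEl a b * polyEl c d = 0 := by
  change (∃ c₁, c = c₁ * b ∧ polyMul (some (a, b)) (some (c, d)) = _) ∨
    (∃ b₁, b = b₁ * c ∧ polyMul (some (a, b)) (some (c, d)) = _) ∨
    polyMul (some (a, b)) (some (c, d)) = none
  simp only [polyMul, Option.bind_some]
  by_cases h : ∃ c₁, c = c₁ * b
  · exact Or.inl ⟨_, h.choose_spec, by rw [dif_pos h]; rfl⟩
  by_cases h' : ∃ b₁, b = b₁ * c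
  · exact Or.inr <| Or.inl ⟨_, h'.choose_spec, by rw [dif_neg h, dif_pos h']; rfl⟩
  · exact Or.inr <| Or.inr <| by rw [dif_neg h, dif_neg h']

protected theorem inv_inv (x : PolyMon ι) : x⁻¹⁻¹ = x := by cases x <;> rfl

theorem inv_ne_zero {x : PolyMon ι} (hx : x ≠ 0) : x⁻¹ ≠ 0 := by
  obtain ⟨a, b, rfl⟩ := exists_eq_polyEl hx
  exact polyEl_ne_zero b a

theorem inv_preimage_singleton (z : PolyMon ι) : (·⁻¹) ⁻¹' {z} = {z⁻¹} :=
  Set.ext fun x =>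
    ⟨fun (hx : x⁻¹ = z) => hx ▸ (PolyMon.inv_inv x).symm, fun hx => hx ▸ PolyMon.inv_inv z⟩

theorem zero_mem_U0 (A : Set (FreeMonoid ι)) : (0 : PolyMon ι) ∈ U0 A := Or.inl rfl

theorem polyEl_mem_U0_iff {A : Set (FreeMonoid ι)} {a b : FreeMonoid ι} :
    polyEl a b ∈ U0 A ↔ a ∉ A ∧ b ∉ A := by
  refine ⟨?_, fun h => Or.inr ⟨a, b, h.1, h.2, rfl⟩⟩
  rintro (h | ⟨a', b', ha', hb', h⟩)
  · exact absurd h (polyEl_ne_zero a b)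
  · obtain ⟨rfl, rfl⟩ : a = a' ∧ b = b' := by simpa [polyEl] using h
    exact ⟨ha', hb'⟩

theorem inv_mem_U0 {A : Set (FreeMonoid ι)} {x : PolyMon ι} (hx : x ∈ U0 A) : x⁻¹ ∈ U0 A := by
  rcases hx with rfl | ⟨a, b, ha, hb, rfl⟩
  · exact zero_mem_U0 A
  · exact polyEl_mem_U0_iff.mpr ⟨hb, ha⟩

theorem inv_preimage_U0 (A : Set (FreeMonoid ι)) : (·⁻¹) ⁻¹' U0 A = U0 A :=
  Set.Subset.antisymm (fun x hx => PolyMon.inv_inv x ▸ inv_mem_U0 hx) fun _ => inv_mem_U0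

def suffixes (A : Set (FreeMonoid ι)) : Set (FreeMonoid ι) := {v | ∃ u, u * v ∈ A}

theorem subset_suffixes (A : Set (FreeMonoid ι)) : A ⊆ suffixes A :=
  fun w hw => ⟨1, by rwa [one_mul]⟩

theorem finite_suffixes {A : Set (FreeMonoid ι)} (hA : A.Finite) : (suffixes A).Finite := by
  have hsub : suffixes A ⊆ ⋃ w ∈ A, FreeMonoid.toList ⁻¹' {l | l ∈ w.toList.tails} := by
    rintro v ⟨u, hu⟩
    exact Set.mem_biUnion hu ((List.mem_tails _ _).mpr ⟨u.toList, rfl⟩)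
  exact (hA.biUnion fun w _ =>
    (List.finite_toSet _).preimage FreeMonoid.toList.injective.injOn).subset hsub

theorem mul_mem_U0_of_mem_U0_suffixes {A : Set (FreeMonoid ι)} {x y : PolyMon ι}
    (hx : x ∈ U0 (suffixes A)) (hy : y ∈ U0 (suffixes A)) : x * y ∈ U0 A := by
  rcases hx with rfl | ⟨a, b, ha, -, rfl⟩
  · exact zero_mem_U0 A
  rcases hy with rfl | ⟨c, d, -, hd, rfl⟩
  · rw [PolyMon.mul_zero]; exact zero_mem_U0 A
  rcases polyEl_mul_polyEl_cases a b c d with ⟨c₁, -, h⟩ | ⟨b₁, -, h⟩ | h <;> rw [h]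
  · exact polyEl_mem_U0_iff.mpr ⟨fun h => ha ⟨c₁, h⟩, fun h => hd (subset_suffixes A h)⟩
  · exact polyEl_mem_U0_iff.mpr ⟨fun h => ha (subset_suffixes A h), fun h => hd ⟨b₁, h⟩⟩
  · exact zero_mem_U0 A

theorem exists_finite_forall_mul_polyEl_mem_U0 {A : Set (FreeMonoid ι)} (hA : A.Finite)
    (c d : FreeMonoid ι) : ∃ B : Set (FreeMonoid ι), B.Finite ∧
      ∀ x ∈ U0 B, x * polyEl c d ∈ U0 A := by
  refine ⟨A ∪ suffixes {c} ∪ (· * c) '' {t | t * d ∈ A},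
    ((hA.union (finite_suffixes (Set.finite_singleton c))).union
      ((hA.preimage (mul_left_injective d).injOn).image _)), ?_⟩
  rintro x (rfl | ⟨a, b, ha, hb, rfl⟩)
  · exact zero_mem_U0 A
  rcases polyEl_mul_polyEl_cases a b c d with ⟨c₁, hc, -⟩ | ⟨b₁, hb₁, h⟩ | h
  · exact absurd (Or.inl (Or.inr ⟨c₁, hc.symm⟩)) hb
  · rw [h]
    exact polyEl_mem_U0_iff.mpr
      ⟨fun h => ha (Or.inl (Or.inl h)), fun h => hb (Or.inr ⟨b₁, h, hb₁.symm⟩)⟩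
  · rw [h]; exact zero_mem_U0 A

theorem exists_finite_forall_polyEl_mul_mem_U0 {A : Set (FreeMonoid ι)} (hA : A.Finite)
    (a b : FreeMonoid ι) : ∃ B : Set (FreeMonoid ι), B.Finite ∧
      ∀ y ∈ U0 B, polyEl a b * y ∈ U0 A := by
  refine ⟨A ∪ suffixes {b} ∪ (· * b) '' {t | t * a ∈ A},
    ((hA.union (finite_suffixes (Set.finite_singleton b))).union
      ((hA.preimage (mul_left_injective a).injOn).image _)), ?_⟩
  rintro y (rfl | ⟨c, d, hc, hd, rfl⟩)
  · rw [PolyMon.mul_zero]; exact zero_mem_U0 A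
  rcases polyEl_mul_polyEl_cases a b c d with ⟨c₁, hc₁, h⟩ | ⟨b₁, hb, -⟩ | h
  · rw [h]
    exact polyEl_mem_U0_iff.mpr
      ⟨fun h => hc (Or.inr ⟨c₁, h, hc₁.symm⟩), fun h => hd (Or.inl (Or.inl h))⟩
  · exact absurd (Or.inl (Or.inr ⟨b₁, hb.symm⟩)) hc
  · rw [h]; exact zero_mem_U0 A

section Topology

attribute [local instance] tauMi

theorem isOpen_singleton_of_ne_zero {x : PolyMon ι} (hx : x ≠ 0) : IsOpen {x} :=
  TopologicalSpace.isOpen_generateFrom_of_mem (Or.inl ⟨x, hx, rfl⟩)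

theorem isOpen_U0 {A : Set (FreeMonoid ι)} (hA : A.Finite) : IsOpen (U0 A) :=
  TopologicalSpace.isOpen_generateFrom_of_mem (Or.inr ⟨A, hA, rfl⟩)

theorem separatedNhds_zero_of_ne_zero {y : PolyMon ι} (hy : y ≠ 0) :
    ∃ U V : Set (PolyMon ι), IsOpen U ∧ IsOpen V ∧ 0 ∈ U ∧ y ∈ V ∧ Disjoint U V := by
  obtain ⟨c, d, rfl⟩ := exists_eq_polyEl hy
  refine ⟨U0 {c}, {polyEl c d}, isOpen_U0 (Set.finite_singleton c),
    isOpen_singleton_of_ne_zero hy, zero_mem_U0 _, rfl, ?_⟩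
  exact Set.disjoint_singleton_right.mpr fun h => (polyEl_mem_U0_iff.mp h).1 rfl

theorem t2Space_tauMi : T2Space (PolyMon ι) := by
  refine ⟨fun x y hxy => ?_⟩
  by_cases hx : x = 0
  · subst hx
    exact separatedNhds_zero_of_ne_zero (Ne.symm hxy)
  by_cases hy : y = 0
  · subst hy
    obtain ⟨U, V, hU, hV, hxU, hyV, hUV⟩ := separatedNhds_zero_of_ne_zero hx
    exact ⟨V, U, hV, hU, hyV, hxU, hUV.symm⟩
  exact ⟨{x}, {y}, isOpen_singleton_of_ne_zero hx, isOpen_singleton_of_ne_zero hy, rfl, rfl,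
    Set.disjoint_singleton.mpr hxy⟩

theorem isOpen_mul_preimage_singleton {z : PolyMon ι} (hz : z ≠ 0) :
    IsOpen ((fun p : PolyMon ι × PolyMon ι => p.1 * p.2) ⁻¹' {z}) := by
  refine isOpen_prod_iff.mpr fun x y (hxy : x * y = z) => ?_
  obtain ⟨hx, hy⟩ := ne_zero_and_ne_zero_of_mul_ne_zero (hxy ▸ hz)
  refine ⟨{x}, {y}, isOpen_singleton_of_ne_zero hx, isOpen_singleton_of_ne_zero hy, rfl, rfl, ?_⟩
  rw [Set.singleton_prod_singleton, Set.singleton_subset_iff]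
  exact hxy

theorem isOpen_mul_preimage_U0 {A : Set (FreeMonoid ι)} (hA : A.Finite) :
    IsOpen ((fun p : PolyMon ι × PolyMon ι => p.1 * p.2) ⁻¹' U0 A) := by
  refine isOpen_prod_iff.mpr fun x y (hxy : x * y ∈ U0 A) => ?_
  by_cases hx : x = 0 <;> by_cases hy : y = 0
  · subst hx hy
    exact ⟨_, _, isOpen_U0 (finite_suffixes hA), isOpen_U0 (finite_suffixes hA),
      zero_mem_U0 _, zero_mem_U0 _, fun p hp => mul_mem_U0_of_mem_U0_suffixes hp.1 hp.2⟩
  · subst hx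
    obtain ⟨c, d, rfl⟩ := exists_eq_polyEl hy
    obtain ⟨B, hB, hmul⟩ := exists_finite_forall_mul_polyEl_mem_U0 hA c d
    refine ⟨U0 B, {polyEl c d}, isOpen_U0 hB, isOpen_singleton_of_ne_zero hy,
      zero_mem_U0 B, rfl, ?_⟩
    rintro ⟨x', y'⟩ ⟨hx', rfl : y' = _⟩
    exact hmul x' hx'
  · subst hy
    obtain ⟨a, b, rfl⟩ := exists_eq_polyEl hx
    obtain ⟨B, hB, hmul⟩ := exists_finite_forall_polyEl_mul_mem_U0 hA a b
    refine ⟨{polyEl a b}, U0 B, isOpen_singleton_of_ne_zero hx, isOpen_U0 hB,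
      rfl, zero_mem_U0 B, ?_⟩
    rintro ⟨x', y'⟩ ⟨rfl : x' = _, hy'⟩
    exact hmul y' hy'
  · refine ⟨{x}, {y}, isOpen_singleton_of_ne_zero hx, isOpen_singleton_of_ne_zero hy,
      rfl, rfl, ?_⟩
    rw [Set.singleton_prod_singleton, Set.singleton_subset_iff]
    exact hxy

theorem continuousMul_tauMi : ContinuousMul (PolyMon ι) := by
  refine ⟨continuous_generateFrom_iff.mpr ?_⟩
  rintro s (⟨z, hz, rfl⟩ | ⟨A, hA, rfl⟩)
  · exact isOpen_mul_preimage_singleton hz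
  · exact isOpen_mul_preimage_U0 hA

theorem continuousInv_tauMi : ContinuousInv (PolyMon ι) := by
  refine ⟨continuous_generateFrom_iff.mpr ?_⟩
  rintro s (⟨z, hz, rfl⟩ | ⟨A, hA, rfl⟩)
  · rw [inv_preimage_singleton]
    exact isOpen_singleton_of_ne_zero (inv_ne_zero hz)
  · rw [inv_preimage_U0]
    exact isOpen_U0 hA

end Topology

end PolyMon

theorem statement_12_general (ι : Type u) :
    @T2Space (PolyMon ι) (tauMi ι) ∧
    @ContinuousMul (PolyMon ι) (tauMi ι) _ ∧
    @ContinuousInv (PolyMon ι) (tauMi ι) _ :=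
  ⟨PolyMon.t2Space_tauMi, PolyMon.continuousMul_tauMi, PolyMon.continuousInv_tauMi⟩

/-- For λ ≥ 2, the topology `τ_mi` on the λ-polycyclic monoid `P_λ` (all nonzero elements
isolated, the sets `U_A(0)` for finite `A ⊆ M_λ` a base at `0`) is Hausdorff and makes
`P_λ` a topological inverse semigroup: multiplication and inversion are continuous. -/
theorem statement_12 (ι : Type u) [Nontrivial ι] :
    @T2Space (PolyMon ι) (tauMi ι) ∧
    @ContinuousMul (PolyMon ι) (tauMi ι) _ ∧
    @ContinuousInv (PolyMon ι) (tauMi ι) _ :=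
  statement_12_general ι
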